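/- arXiv:0806.4415 — 2 statements merged into one kernel-verified Lean document; each statement's English description precedes it below -/
import Mathlib

section
/- For p ∈ [1/6, 1/2), the function y ↦ h(f⁻¹(y) * p) is convex, where f(x) = h(x/2) + h((1-x)/2) - 1 restricted to [0, 1/2], f⁻¹ is its inverse, t*p = t(1-p) + (1-t)p, and h is the binary entropy function. -/
/-!
Write `c = 1 - 2p` and `u = 1 - 2x`. In terms of `artanh`, the derivatives of `f` and of
`g x = binent (x * (1 - p) + (1 - x) * p)` are `(artanh (1 - x) - artanh x) / log 2` and
`2c artanh (c u) / log 2`. By Cauchy's mean value theorem, `g ∘ f⁻¹` is convex as soon as `g' / f'`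
is increasing in `x`, i.e. as soon as `artanh (c u) / (artanh ((1 + u) / 2) - artanh ((1 - u) / 2))`
is decreasing in `u ∈ (0, 1)`. Numerator and denominator vanish at `u = 0`, so by the monotone
form of l'Hôpital's rule it suffices that the ratio of their derivatives,
`c (1 - u²)(9 - u²) / (4 (1 - c²u²)(3 - u²))`, is decreasing, which for `c ≤ 2/3` is a polynomial
inequality.
-/

open Set

noncomputable def binent (x : ℝ) : ℝ := -x * Real.logb 2 x - (1 - x) * Real.logb 2 (1 - x)

noncomputable def f (x : ℝ) : ℝ := binent (x / 2) + binent ((1 - x) / 2) - 1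

theorem strictMonoOn_of_hasDerivAt_pos {D : Set ℝ} (hD : Convex ℝ D) {f f' : ℝ → ℝ}
    (hf : ContinuousOn f D) (hf' : ∀ x ∈ interior D, HasDerivAt f (f' x) x)
    (hf'_pos : ∀ x ∈ interior D, 0 < f' x) : StrictMonoOn f D :=
  strictMonoOn_of_hasDerivWithinAt_pos hD hf (fun x hx => (hf' x hx).hasDerivWithinAt) hf'_pos

theorem exists_div_deriv_eq_ratio_slope {f g f' g' : ℝ → ℝ} {a b : ℝ} (hab : a < b)
    (hf : ContinuousOn f (Icc a b)) (hg : ContinuousOn g (Icc a b))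
    (hf' : ∀ x ∈ Ioo a b, HasDerivAt f (f' x) x) (hg' : ∀ x ∈ Ioo a b, HasDerivAt g (g' x) x)
    (hf'_pos : ∀ x ∈ Ioo a b, 0 < f' x) :
    ∃ c ∈ Ioo a b, (g b - g a) / (f b - f a) = g' c / f' c := by
  have hfab : f a < f b :=
    strictMonoOn_of_hasDerivAt_pos (convex_Icc a b) hf (by rwa [interior_Icc])
      (by rwa [interior_Icc]) (left_mem_Icc.2 hab.le) (right_mem_Icc.2 hab.le) hab
  obtain ⟨c, hc, hcauchy⟩ := exists_ratio_hasDerivAt_eq_ratio_slope f f' hab hf hf' g g' hg hg'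
  refine ⟨c, hc, ?_⟩
  rw [div_eq_div_iff (sub_pos.2 hfab).ne' (hf'_pos c hc).ne']
  linarith

theorem convexOn_comp_of_monotoneOn_div_deriv {f g f' g' finv : ℝ → ℝ} {a b : ℝ} {s : Set ℝ}
    (hs : Convex ℝ s) (hf : ContinuousOn f (Icc a b)) (hg : ContinuousOn g (Icc a b))
    (hf' : ∀ x ∈ Ioo a b, HasDerivAt f (f' x) x) (hg' : ∀ x ∈ Ioo a b, HasDerivAt g (g' x) x)
    (hf'_pos : ∀ x ∈ Ioo a b, 0 < f' x) (hratio : MonotoneOn (fun x => g' x / f' x) (Ioo a b))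
    (hfinv : ∀ y ∈ s, finv y ∈ Icc a b ∧ f (finv y) = y) :
    ConvexOn ℝ s (g ∘ finv) := by
  have hmono : StrictMonoOn f (Icc a b) :=
    strictMonoOn_of_hasDerivAt_pos (convex_Icc a b) hf (by rwa [interior_Icc])
      (by rwa [interior_Icc])
  have slope {y z : ℝ} (hy : y ∈ s) (hz : z ∈ s) (hyz : y < z) :
      ∃ c ∈ Ioo (finv y) (finv z), c ∈ Ioo a b ∧
        (g (finv z) - g (finv y)) / (z - y) = g' c / f' c := by
    obtain ⟨hy_mem, hfy⟩ := hfinv y hy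
    obtain ⟨hz_mem, hfz⟩ := hfinv z hz
    have hlt : finv y < finv z := (hmono.lt_iff_lt hy_mem hz_mem).1 (by rwa [hfy, hfz])
    have hsub : Ioo (finv y) (finv z) ⊆ Ioo a b := Ioo_subset_Ioo hy_mem.1 hz_mem.2
    have hsub' : Icc (finv y) (finv z) ⊆ Icc a b := Icc_subset_Icc hy_mem.1 hz_mem.2
    obtain ⟨c, hc, hslope⟩ := exists_div_deriv_eq_ratio_slope hlt (hf.mono hsub') (hg.mono hsub')
      (fun x hx => hf' x (hsub hx)) (fun x hx => hg' x (hsub hx))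
      (fun x hx => hf'_pos x (hsub hx))
    exact ⟨c, hc, hsub hc, by rwa [hfy, hfz] at hslope⟩
  refine convexOn_iff_slope_mono_adjacent.2 ⟨hs, fun x y z hx hz hxy hyz => ?_⟩
  have hy : y ∈ s := hs.ordConnected.out hx hz ⟨hxy.le, hyz.le⟩
  obtain ⟨c₁, hc₁, hc₁_mem, h₁⟩ := slope hx hy hxy
  obtain ⟨c₂, hc₂, hc₂_mem, h₂⟩ := slope hy hz hyz
  simp only [Function.comp_apply, h₁, h₂]
  exact hratio hc₁_mem hc₂_mem (hc₁.2.trans hc₂.1).le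

/-- The monotone form of l'Hôpital's rule. -/
theorem antitoneOn_div_of_antitoneOn_div_deriv {f g f' g' : ℝ → ℝ} {a b : ℝ}
    (hf : ContinuousOn f (Ico a b)) (hg : ContinuousOn g (Ico a b))
    (hf' : ∀ x ∈ Ioo a b, HasDerivAt f (f' x) x) (hg' : ∀ x ∈ Ioo a b, HasDerivAt g (g' x) x)
    (hfa : f a = 0) (hga : g a = 0) (hf'_pos : ∀ x ∈ Ioo a b, 0 < f' x)
    (hratio : AntitoneOn (fun x => g' x / f' x) (Ioo a b)) :
    AntitoneOn (fun x => g x / f x) (Ioo a b) := by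
  have hf_pos : ∀ x ∈ Ioo a b, 0 < f x := fun x hx => by
    simpa [hfa] using strictMonoOn_of_hasDerivAt_pos (convex_Ico a b) hf
      (by rwa [interior_Ico]) (by rwa [interior_Ico])
      (left_mem_Ico.2 (hx.1.trans hx.2)) (Ioo_subset_Ico_self hx) hx.1
  have hderiv : ∀ x ∈ Ioo a b, HasDerivAt (fun x => g x / f x)
      ((g' x * f x - g x * f' x) / f x ^ 2) x :=
    fun x hx => (hg' x hx).div (hf' x hx) (hf_pos x hx).ne'
  refine antitoneOn_of_hasDerivWithinAt_nonpos (convex_Ioo a b)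
    (fun x hx => (hderiv x hx).continuousAt.continuousWithinAt)
    (fun x hx => (hderiv x (by rwa [interior_Ioo] at hx)).hasDerivWithinAt) fun x hx => ?_
  rw [interior_Ioo] at hx
  have hsub : Ioo a x ⊆ Ioo a b := Ioo_subset_Ioo_right hx.2.le
  obtain ⟨c, hc, hslope⟩ := exists_div_deriv_eq_ratio_slope hx.1
    (hf.mono (Icc_subset_Ico_right hx.2)) (hg.mono (Icc_subset_Ico_right hx.2))
    (fun y hy => hf' y (hsub hy)) (fun y hy => hg' y (hsub hy)) (fun y hy => hf'_pos y (hsub hy))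
  rw [hfa, hga, sub_zero, sub_zero] at hslope
  have hle : g' x / f' x ≤ g x / f x := hslope ▸ hratio (hsub hc) hx hc.2.le
  rw [div_le_div_iff₀ (hf'_pos x hx) (hf_pos x hx)] at hle
  exact div_nonpos_of_nonpos_of_nonneg (by linarith) (sq_nonneg _)

theorem antitoneOn_rational_of_le_two_thirds {c : ℝ} (hc₀ : 0 ≤ c) (hc : c ≤ 2 / 3) :
    AntitoneOn (fun u => c * ((1 - u ^ 2) * (9 - u ^ 2)) / (4 * (1 - c ^ 2 * u ^ 2) * (3 - u ^ 2)))
      (Ioo 0 1) := by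
  have hk : c ^ 2 ≤ 4 / 9 := by nlinarith
  have hden : ∀ w ∈ Ioo (0 : ℝ) 1, 0 < 4 * (1 - c ^ 2 * w ^ 2) * (3 - w ^ 2) := by
    intro w hw
    have hw2 : w ^ 2 < 1 := by nlinarith [hw.1, hw.2]
    have : c ^ 2 * w ^ 2 ≤ 4 / 9 := by nlinarith [sq_nonneg w, sq_nonneg c]
    exact mul_pos (by linarith) (by linarith)
  intro u hu v hv huv
  have hs : u ^ 2 ≤ v ^ 2 := pow_le_pow_left₀ hu.1.le huv 2
  -- The cross-multiplied difference is `c (v² - u²) Q`; `Q` is affine in `c²` with a negative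
  -- slope, and at `c² = 4/9` it equals `9 + (u² + v²) - 19 u²v²/9 > 0`.
  have hQ : 0 ≤ (21 - 27 * c ^ 2) + (9 * c ^ 2 - 3) * (u ^ 2 + v ^ 2)
      + (1 - 7 * c ^ 2) * (u ^ 2 * v ^ 2) := by
    have hu2 : u ^ 2 < 1 := by nlinarith [hu.1, hu.2]
    have hv2 : v ^ 2 < 1 := by nlinarith [hv.1, hv.2]
    have huv2 : u ^ 2 * v ^ 2 ≤ 1 := by nlinarith [sq_nonneg u, sq_nonneg v]
    have hslope : 0 ≤ 27 - 9 * (u ^ 2 + v ^ 2) + 7 * (u ^ 2 * v ^ 2) := by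
      nlinarith [sq_nonneg u, sq_nonneg v]
    nlinarith [mul_nonneg (sub_nonneg.2 hk) hslope, sq_nonneg u, sq_nonneg v]
  rw [div_le_div_iff₀ (hden v hv) (hden u hu)]
  linear_combination 4 * mul_nonneg hc₀ (mul_nonneg (sub_nonneg.2 hs) hQ)

open Real

theorem artanh_eq_log_sub_log {x : ℝ} (hx : x ∈ Ioo (-1) 1) :
    artanh x = (log (1 + x) - log (1 - x)) / 2 := by
  rw [artanh_eq_half_log (Ioo_subset_Icc_self hx),
    log_div (by linarith [hx.1]) (by linarith [hx.2])]
  ring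

theorem hasDerivAt_artanh {x : ℝ} (hx : x ∈ Ioo (-1) 1) :
    HasDerivAt artanh (1 - x ^ 2)⁻¹ x := by
  have h₁ : 0 < 1 + x := by linarith [hx.1]
  have h₂ : 0 < 1 - x := by linarith [hx.2]
  have hlog : HasDerivAt (fun y => (log (1 + y) - log (1 - y)) / 2) (1 - x ^ 2)⁻¹ x := by
    refine ((((hasDerivAt_id x).const_add 1).log h₁.ne').sub
      (((hasDerivAt_id x).const_sub 1).log h₂.ne') |>.div_const 2).congr_deriv ?_
    rw [id, show 1 - x ^ 2 = (1 + x) * (1 - x) by ring]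
    field_simp
    ring
  exact hlog.congr_of_eventuallyEq <| Filter.eventuallyEq_of_mem (isOpen_Ioo.mem_nhds hx)
    fun y hy => artanh_eq_log_sub_log hy

theorem hasDerivAt_artanh_sub_artanh {u : ℝ} (hu : u ∈ Ioo (-1) 1) :
    HasDerivAt (fun u => artanh ((1 + u) / 2) - artanh ((1 - u) / 2))
      (4 * (3 - u ^ 2) / ((1 - u ^ 2) * (9 - u ^ 2))) u := by
  have h₁ : 0 < 1 + u := by linarith [hu.1]
  have h₂ : 0 < 1 - u := by linarith [hu.2]
  have h₃ : 0 < 3 + u := by linarith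
  have h₄ : 0 < 3 - u := by linarith
  have hplus := (hasDerivAt_artanh (x := (1 + u) / 2) ⟨by linarith, by linarith⟩).comp u
    (((hasDerivAt_id u).const_add 1).div_const 2)
  have hminus := (hasDerivAt_artanh (x := (1 - u) / 2) ⟨by linarith, by linarith⟩).comp u
    (((hasDerivAt_id u).const_sub 1).div_const 2)
  refine (hplus.sub hminus).congr_deriv ?_
  rw [show 1 - ((1 + u) / 2) ^ 2 = (1 - u) * (3 + u) / 4 by ring,
    show 1 - ((1 - u) / 2) ^ 2 = (1 + u) * (3 - u) / 4 by ring,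
    show 1 - u ^ 2 = (1 + u) * (1 - u) by ring, show 9 - u ^ 2 = (3 + u) * (3 - u) by ring]
  field_simp
  ring

theorem antitoneOn_artanh_mul_div_artanh_sub_artanh {c : ℝ} (hc₀ : 0 ≤ c) (hc : c ≤ 2 / 3) :
    AntitoneOn (fun u => artanh (c * u) / (artanh ((1 + u) / 2) - artanh ((1 - u) / 2)))
      (Ioo 0 1) := by
  have hbounds : ∀ u ∈ Ioo (-1 : ℝ) 1, 0 < 1 - u ^ 2 ∧ c * u ∈ Ioo (-1 : ℝ) 1 :=
    fun u hu => ⟨by nlinarith [hu.1, hu.2], by constructor <;> nlinarith [hu.1, hu.2]⟩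
  have hnum : ∀ u ∈ Ioo (-1 : ℝ) 1,
      HasDerivAt (fun u => artanh (c * u)) (c * (1 - (c * u) ^ 2)⁻¹) u := fun u hu =>
    ((hasDerivAt_artanh (hbounds u hu).2).comp u ((hasDerivAt_id u).const_mul c)).congr_deriv
      (by ring)
  have hIco : Ico (0 : ℝ) 1 ⊆ Ioo (-1) 1 := fun u hu => ⟨by linarith [hu.1], hu.2⟩
  have hIoo : Ioo (0 : ℝ) 1 ⊆ Ioo (-1) 1 := Ioo_subset_Ioo_left (by norm_num)
  refine antitoneOn_div_of_antitoneOn_div_deriv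
    (fun u hu => (hasDerivAt_artanh_sub_artanh (hIco hu)).continuousAt.continuousWithinAt)
    (fun u hu => (hnum u (hIco hu)).continuousAt.continuousWithinAt)
    (fun u hu => hasDerivAt_artanh_sub_artanh (hIoo hu)) (fun u hu => hnum u (hIoo hu))
    (by simp) (by simp) (fun u hu => ?_)
    ((antitoneOn_rational_of_le_two_thirds hc₀ hc).congr fun u hu => ?_)
  all_goals
    obtain ⟨h₁, hcu⟩ := hbounds u (hIoo hu)
    have h₃ : 0 < 3 - u ^ 2 := by linarith
    have h₉ : 0 < 9 - u ^ 2 := by linarith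
  · positivity
  · have : 0 < 1 - c ^ 2 * u ^ 2 := by nlinarith [hcu.1, hcu.2]
    field_simp

theorem binent_eq_binEntropy_div (x : ℝ) : binent x = binEntropy x / log 2 := by
  simp only [binent, binEntropy, logb, log_inv]
  ring

theorem continuous_binent : Continuous binent := by
  simpa only [funext binent_eq_binEntropy_div] using binEntropy_continuous.div_const _

theorem hasDerivAt_binent {v : ℝ} (hv : v ∈ Ioo (-1) 1) :
    HasDerivAt binent (2 * artanh v / log 2) ((1 - v) / 2) := by
  have h₁ : 0 < 1 + v := by linarith [hv.1]
  have h₂ : 0 < 1 - v := by linarith [hv.2]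
  rw [funext binent_eq_binEntropy_div]
  refine ((hasDerivAt_binEntropy (by positivity) (by linarith)).div_const (log 2)).congr_deriv ?_
  rw [artanh_eq_log_sub_log hv, show 1 - (1 - v) / 2 = (1 + v) / 2 by ring,
    log_div h₁.ne' two_ne_zero, log_div h₂.ne' two_ne_zero]
  ring

theorem continuous_f : Continuous f := by
  have := continuous_binent
  unfold f
  fun_prop

theorem hasDerivAt_f {x : ℝ} (hx : x ∈ Ioo 0 1) :
    HasDerivAt f ((artanh (1 - x) - artanh x) / log 2) x := by
  have hleft := (hasDerivAt_binent (v := 1 - x) ⟨by linarith [hx.2], by linarith [hx.1]⟩).comp_of_eq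
    x ((hasDerivAt_id x).div_const 2) (by simp)
  have hright := (hasDerivAt_binent (v := x) ⟨by linarith [hx.1], hx.2⟩).comp_of_eq x
    (((hasDerivAt_id x).const_sub 1).div_const 2) (by simp)
  exact ((hleft.add hright).sub_const 1).congr_deriv (by ring)

theorem hasDerivAt_binent_affine {p x : ℝ} (h : (1 - 2 * p) * (1 - 2 * x) ∈ Ioo (-1) 1) :
    HasDerivAt (fun x => binent (x * (1 - p) + (1 - x) * p))
      (2 * (1 - 2 * p) * artanh ((1 - 2 * p) * (1 - 2 * x)) / log 2) x := by
  have hinner : HasDerivAt (fun x => x * (1 - p) + (1 - x) * p) (1 - 2 * p) x :=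
    (((hasDerivAt_id x).mul_const (1 - p)).add
      (((hasDerivAt_id x).const_sub 1).mul_const p)).congr_deriv (by simp; ring)
  exact ((hasDerivAt_binent h).comp_of_eq x hinner (by ring)).congr_deriv (by ring)

theorem monotoneOn_deriv_binent_affine_div_deriv_f {c : ℝ} (hc₀ : 0 ≤ c) (hc : c ≤ 2 / 3) :
    MonotoneOn (fun x => (2 * c * artanh (c * (1 - 2 * x)) / log 2) /
      ((artanh (1 - x) - artanh x) / log 2)) (Ioo 0 (1 / 2)) := by
  intro x hx y hy hxy
  have hanti := antitoneOn_artanh_mul_div_artanh_sub_artanh hc₀ hc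
    (a := 1 - 2 * y) ⟨by linarith [hy.2], by linarith [hy.1]⟩
    (b := 1 - 2 * x) ⟨by linarith [hx.2], by linarith [hx.1]⟩ (by linarith)
  simp only [div_div_div_cancel_right₀ (log_pos one_lt_two).ne', mul_div_assoc]
  refine mul_le_mul_of_nonneg_left ?_ (by positivity)
  convert hanti using 3 <;> ring_nf

theorem stmt_15 (p : ℝ) (hp : p ∈ Ico (1 / 6 : ℝ) (1 / 2)) (finv : ℝ → ℝ)
    (hfinv : ∀ y ∈ Icc (0 : ℝ) (2 * binent (1 / 4) - 1),
      finv y ∈ Icc (0 : ℝ) (1 / 2) ∧ f (finv y) = y) :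
    ConvexOn ℝ (Icc (0 : ℝ) (2 * binent (1 / 4) - 1))
      (fun y => binent (finv y * (1 - p) + (1 - finv y) * p)) := by
  obtain ⟨hp₁, hp₂⟩ := hp
  have hc₀ : 0 ≤ 1 - 2 * p := by linarith
  have hc : 1 - 2 * p ≤ 2 / 3 := by linarith
  have hf'_pos : ∀ x ∈ Ioo (0 : ℝ) (1 / 2), 0 < (artanh (1 - x) - artanh x) / log 2 :=
    fun x hx => div_pos (sub_pos.2 (artanh_lt_artanh (by linarith [hx.1]) (by linarith [hx.1])
      (by linarith [hx.2]))) (log_pos one_lt_two)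
  exact convexOn_comp_of_monotoneOn_div_deriv (g := fun x => binent (x * (1 - p) + (1 - x) * p))
    (convex_Icc _ _) continuous_f.continuousOn (by have := continuous_binent; fun_prop)
    (fun x hx => hasDerivAt_f ⟨hx.1, by linarith [hx.2]⟩)
    (fun x hx => hasDerivAt_binent_affine ⟨by nlinarith [hx.1, hx.2], by nlinarith [hx.1, hx.2]⟩)
    hf'_pos (monotoneOn_deriv_binent_affine_div_deriv_f hc₀ hc) hfinv
end

section
/- Let h be the binary entropy function. The curve parametrized by s ∈ [0, 1/2] via R₀(s) = 1 - h(s(1-p) + (1-s)p), R₁(s) = (1/2)(h(s/2) + h((1-s)/2) - 1), for p = (√3 - 1)/(2√3), has slope dR₁/dR₀ = -1 at s = 1/2, i.e. lim_{s→1/2} R₁'(s)/R₀'(s) = -1. -/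
/-! Both `R₀'` and `R₁'` vanish at `s = 1/2`, so the limit of their ratio is the ratio of the
second derivatives there. With `h'' x = -1 / (x (1 - x) ln 2)` these are
`R₁''(1/2) = h''(1/4) / 4 = -4 / (3 ln 2)` and `R₀''(1/2) = -(1 - 2p)² h''(1/2) = 4 (1 - 2p)² / ln 2`,
and the chosen `p` is the one with `(1 - 2p)² = 1/3`. -/

open Set Filter

open Real Topology

/-- The binary convolution `s ⋆ p`. -/
def binConv (s p : ℝ) : ℝ := s * (1 - p) + (1 - s) * p

noncomputable def R₀ (p s : ℝ) : ℝ := 1 - binent (binConv s p)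

noncomputable def R₁ (s : ℝ) : ℝ := 1 / 2 * (binent (s / 2) + binent ((1 - s) / 2) - 1)

lemma binent_eq_binEntropy_div_log_two : binent = fun x => binEntropy x / log 2 := by
  funext x
  simp only [binent, binEntropy, logb, log_inv]
  ring

lemma hasDerivAt_binent_s17 {x : ℝ} (hx₀ : x ≠ 0) (hx₁ : x ≠ 1) :
    HasDerivAt binent (deriv binEntropy x / log 2) x := by
  rw [binent_eq_binEntropy_div_log_two]
  exact (differentiableAt_binEntropy hx₀ hx₁).hasDerivAt.div_const _

lemma hasDerivAt_deriv_binEntropy {x : ℝ} (hx₀ : x ≠ 0) (hx₁ : x ≠ 1) :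
    HasDerivAt (deriv binEntropy) (-1 / (x * (1 - x))) x := by
  have hx₁' : 1 - x ≠ 0 := sub_ne_zero.2 hx₁.symm
  rw [funext deriv_binEntropy]
  refine ((((hasDerivAt_id' x).const_sub 1).log hx₁').fun_sub (hasDerivAt_log hx₀)).congr_deriv ?_
  field_simp
  ring

lemma deriv_binEntropy_half : deriv binEntropy (1 / 2) = 0 := by
  rw [deriv_binEntropy]; norm_num

lemma tendsto_div_nhdsNE_of_hasDerivAt {f g : ℝ → ℝ} {f' g' a : ℝ} (hf : HasDerivAt f f' a)
    (hg : HasDerivAt g g' a) (hfa : f a = 0) (hga : g a = 0) (hg' : g' ≠ 0) :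
    Tendsto (fun x => f x / g x) (𝓝[≠] a) (𝓝 (f' / g')) := by
  refine ((hasDerivAt_iff_tendsto_slope.1 hf).div (hasDerivAt_iff_tendsto_slope.1 hg) hg').congr' ?_
  filter_upwards [self_mem_nhdsWithin] with x hx
  simp [slope_def_field, hfa, hga, div_div_div_cancel_right₀ (sub_ne_zero.2 hx)]

lemma hasDerivAt_R₁ {s : ℝ} (hs₀ : 0 < s) (hs₁ : s < 1) :
    HasDerivAt R₁ ((deriv binEntropy (s / 2) - deriv binEntropy ((1 - s) / 2)) / (4 * log 2)) s := by
  have hA := (hasDerivAt_binent_s17 (x := s / 2) (by positivity) (by linarith)).comp s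
    ((hasDerivAt_id' s).div_const 2)
  have hB := (hasDerivAt_binent_s17 (x := (1 - s) / 2) (by linarith) (by linarith)).comp s
    (((hasDerivAt_id' s).const_sub 1).div_const 2)
  refine (((hA.add hB).sub_const 1).const_mul (1 / 2)).congr_deriv ?_
  field_simp
  ring

lemma deriv_R₁_half : deriv R₁ (1 / 2) = 0 := by
  rw [(hasDerivAt_R₁ (by norm_num) (by norm_num)).deriv]
  norm_num

lemma hasDerivAt_deriv_R₁ : HasDerivAt (deriv R₁) (-4 / (3 * log 2)) (1 / 2) := by
  have hR₁ : deriv R₁ =ᶠ[𝓝 (1 / 2)]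
      fun s => (deriv binEntropy (s / 2) - deriv binEntropy ((1 - s) / 2)) / (4 * log 2) := by
    filter_upwards [Ioo_mem_nhds (by norm_num : (0 : ℝ) < 1 / 2) (by norm_num : (1 / 2 : ℝ) < 1)]
      with s hs using (hasDerivAt_R₁ hs.1 hs.2).deriv
  have hA := (hasDerivAt_deriv_binEntropy (x := 1 / 2 / 2) (by norm_num) (by norm_num)).comp
    (1 / 2) ((hasDerivAt_id' (1 / 2 : ℝ)).div_const 2)
  have hB := (hasDerivAt_deriv_binEntropy (x := (1 - 1 / 2) / 2) (by norm_num) (by norm_num)).comp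
    (1 / 2) (((hasDerivAt_id' (1 / 2 : ℝ)).const_sub 1).div_const 2)
  refine (((hA.sub hB).div_const (4 * log 2)).congr_of_eventuallyEq hR₁).congr_deriv ?_
  field_simp
  norm_num

lemma hasDerivAt_binConv (p s : ℝ) : HasDerivAt (binConv · p) (1 - 2 * p) s := by
  refine (((hasDerivAt_id' s).mul_const (1 - p)).add
    (((hasDerivAt_id' s).const_sub 1).mul_const p)).congr_deriv ?_
  ring

lemma binConv_half (p : ℝ) : binConv (1 / 2) p = 1 / 2 := by
  unfold binConv; ring

lemma hasDerivAt_R₀ (p : ℝ) {s : ℝ} (h₀ : binConv s p ≠ 0) (h₁ : binConv s p ≠ 1) :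
    HasDerivAt (R₀ p) (-(1 - 2 * p) * deriv binEntropy (binConv s p) / log 2) s := by
  refine (((hasDerivAt_binent_s17 h₀ h₁).comp s (hasDerivAt_binConv p s)).const_sub 1).congr_deriv ?_
  ring

lemma deriv_R₀_half (p : ℝ) : deriv (R₀ p) (1 / 2) = 0 := by
  rw [(hasDerivAt_R₀ p (by norm_num [binConv_half]) (by norm_num [binConv_half])).deriv,
    binConv_half, deriv_binEntropy_half]
  ring

lemma hasDerivAt_deriv_R₀ (p : ℝ) :
    HasDerivAt (deriv (R₀ p)) (4 * (1 - 2 * p) ^ 2 / log 2) (1 / 2) := by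
  have hcont := (hasDerivAt_binConv p (1 / 2)).continuousAt
  have hR₀ : deriv (R₀ p) =ᶠ[𝓝 (1 / 2)]
      fun s => -(1 - 2 * p) * deriv binEntropy (binConv s p) / log 2 := by
    filter_upwards [hcont.eventually_ne (by norm_num [binConv_half] : binConv (1 / 2) p ≠ 0),
      hcont.eventually_ne (by norm_num [binConv_half] : binConv (1 / 2) p ≠ 1)]
      with s h₀ h₁ using (hasDerivAt_R₀ p h₀ h₁).deriv
  have h := (hasDerivAt_deriv_binEntropy (x := binConv (1 / 2) p) (by norm_num [binConv_half])
    (by norm_num [binConv_half])).comp (1 / 2) (hasDerivAt_binConv p (1 / 2))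
  refine (((h.const_mul (-(1 - 2 * p))).div_const (log 2)).congr_of_eventuallyEq hR₀).congr_deriv ?_
  rw [binConv_half]
  field_simp
  ring

theorem stmt_17 :
    let p : ℝ := (Real.sqrt 3 - 1) / (2 * Real.sqrt 3)
    Tendsto
      (fun s => deriv (fun t => (1 / 2) * (binent (t / 2) + binent ((1 - t) / 2) - 1)) s /
        deriv (fun t => 1 - binent (t * (1 - p) + (1 - t) * p)) s)
      (nhdsWithin (1 / 2) (Ico (0 : ℝ) (1 / 2))) (nhds (-1)) := by
  intro p
  have hp : (1 - 2 * p) ^ 2 = 1 / 3 := by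
    have h3 : √3 ^ 2 = 3 := sq_sqrt (by norm_num)
    have : √3 ≠ 0 := by positivity
    simp only [p]
    field_simp
    linear_combination -h3
  have hlim := tendsto_div_nhdsNE_of_hasDerivAt hasDerivAt_deriv_R₁ (hasDerivAt_deriv_R₀ p)
    deriv_R₁_half (deriv_R₀_half p) (by rw [hp]; positivity)
  rw [hp, show -4 / (3 * log 2) / (4 * (1 / 3) / log 2) = (-1 : ℝ) by field_simp] at hlim
  exact hlim.mono_left (nhdsWithin_mono _ fun s hs => hs.2.ne)
end
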